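/- arXiv:math/0208237 — 4 statements merged into one kernel-verified Lean document; each statement's English description precedes it below -/
import Mathlib

section
/- For every ε > 0 there exists a positive integer m = m(ε) such that for all i ≥ 1, the number f(i) of positive (1+ε)-aperiodic words of length i over an alphabet with m letters satisfies f(i) > m^{(1−ε/2)·i}. In particular the set of positive (1+ε)-aperiodic words over the alphabet is infinite. -/
/-!
Let `f i` count the `(1 + ε)`-aperiodic words of length `i` over `m` letters. Appending a letter
to each of them gives `m · f i` words. Those that are no longer aperiodic end in a `p`-periodic
suffix of length at least `(1 + ε) p`, so their last `⌈ε p⌉` letters are determined by the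
rest, which is an aperiodic word of length `i + 1 - ⌈ε p⌉`. Hence
`m · f i ≤ f (i + 1) + ∑ₚ f (i + 1 - ⌈ε p⌉)`, and once `m ^ (ε/2) ≥ 4` an induction
shows `f (i + 1) ≥ m ^ (1 - ε/2) · f i`; starting from `f 1 = m` this gives the bound.
-/

noncomputable section

namespace OlshanskiiSapir

def listPow {γ : Type} (A : List γ) : ℕ → List γ
  | 0 => []
  | k + 1 => A ++ listPow A k

def CAperiodic {m : ℕ} (c : ℝ) (v : List (Fin m)) : Prop :=
  ∀ A : List (Fin m), A ≠ [] → ∀ w : List (Fin m), w ≠ [] → w <:+: v →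
    (∃ k : ℕ, w <:+: listPow A k) → (w.length : ℝ) < c * (A.length : ℝ)

section Periodicity

variable {α : Type}

def HasPeriod (p : ℕ) (w : List α) : Prop :=
  ∀ j, j + p < w.length → w[j + p]? = w[j]?

theorem hasPeriod_listPow (A : List α) (k : ℕ) : HasPeriod A.length (listPow A k) := by
  induction k with
  | zero => intro j hj; simp [listPow] at hj
  | succ k ih =>
    intro j hj
    simp only [listPow, List.length_append] at hj ⊢
    rw [List.getElem?_append_right (by omega), Nat.add_sub_cancel]
    rcases lt_or_ge j A.length with hjA | hjA
    · cases k with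
      | zero => simp [listPow] at hj
      | succ k => simp only [listPow, List.getElem?_append_left hjA]
    · rw [List.getElem?_append_right hjA, ← ih (j - A.length) (by omega), Nat.sub_add_cancel hjA]

theorem HasPeriod.infix {p : ℕ} {v w : List α} (hv : HasPeriod p v) (hwv : w <:+: v) :
    HasPeriod p w := by
  obtain ⟨k, hk, hw⟩ := List.infix_iff_getElem?.mp hwv
  intro j hj
  have := hv (j + k) (by omega)
  rw [List.getElem?_eq_getElem hj, List.getElem?_eq_getElem (by omega), ← Option.some_inj,
    ← hw _ hj, ← hw j (by omega), ← this, Nat.add_right_comm]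

theorem HasPeriod.eq_of_take_eq {p : ℕ} (hp : 0 < p) {w w' : List α} (hw : HasPeriod p w)
    (hw' : HasPeriod p w') (hl : w.length = w'.length) (ht : w.take p = w'.take p) : w = w' := by
  apply List.ext_getElem?
  intro n
  induction n using Nat.strong_induction_on with
  | _ n ih =>
    rcases lt_or_ge n p with hnp | hnp
    · simpa [List.getElem?_take, hnp] using congrArg (·[n]?) ht
    rcases lt_or_ge n w.length with hn | hn
    · obtain ⟨j, rfl⟩ := Nat.exists_eq_add_of_le' hnp
      rw [hw j hn, hw' j (hl ▸ hn), ih j (by omega)]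
    · rw [List.getElem?_eq_none hn, List.getElem?_eq_none (by omega)]

def HasPeriodicSuffix (p d : ℕ) (v : List α) : Prop :=
  ∃ x w, v = x ++ w ∧ w.length = p + d ∧ HasPeriod p w

theorem HasPeriodicSuffix.add_le_length {p d : ℕ} {v : List α} (h : HasPeriodicSuffix p d v) :
    p + d ≤ v.length := by
  obtain ⟨x, w, rfl, hw, -⟩ := h
  simp [hw]

theorem HasPeriodicSuffix.eq_of_take_eq {p d : ℕ} (hp : 0 < p) {v v' : List α}
    (hv : HasPeriodicSuffix p d v) (hv' : HasPeriodicSuffix p d v') (hl : v.length = v'.length)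
    (ht : v.take (v.length - d) = v'.take (v'.length - d)) : v = v' := by
  obtain ⟨x, w, rfl, hwl, hw⟩ := hv
  obtain ⟨x', w', rfl, hwl', hw'⟩ := hv'
  simp only [List.length_append] at hl ht
  have hx : x.length = x'.length := by omega
  rw [show x.length + w.length - d = x.length + p by omega,
    show x'.length + w'.length - d = x'.length + p by omega,
    List.take_length_add_append, List.take_length_add_append] at ht
  obtain ⟨rfl, htake⟩ := List.append_inj ht hx
  rw [hw.eq_of_take_eq hp hw' (by omega) htake]

end Periodicity

section Aperiodic

variable {m : ℕ}

theorem CAperiodic.infix {c : ℝ} {u v : List (Fin m)} (hv : CAperiodic c v) (huv : u <:+: v) :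
    CAperiodic c u :=
  fun A hA w hw hwu hk => hv A hA w hw (hwu.trans huv) hk

theorem CAperiodic.mono {c c' : ℝ} (hcc : c ≤ c') {v : List (Fin m)} (hv : CAperiodic c v) :
    CAperiodic c' v := fun A hA w hw hwv hk =>
  (hv A hA w hw hwv hk).trans_le (mul_le_mul_of_nonneg_right hcc (Nat.cast_nonneg _))

theorem caperiodic_singleton {c : ℝ} (hc : 1 < c) (a : Fin m) : CAperiodic c [a] := by
  intro A hA w _ hwa _
  have hw : (w.length : ℝ) ≤ 1 := by exact_mod_cast hwa.length_le
  have hA : (1 : ℝ) ≤ A.length := by exact_mod_cast List.length_pos_iff.mpr hA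
  nlinarith

theorem exists_hasPeriodicSuffix_of_not_caperiodic_append {ε : ℝ} (hε : 0 ≤ ε)
    {u : List (Fin m)} {a : Fin m} (hu : CAperiodic (1 + ε) u)
    (hua : ¬ CAperiodic (1 + ε) (u ++ [a])) :
    ∃ p, 0 < p ∧ HasPeriodicSuffix p ⌈ε * p⌉₊ (u ++ [a]) := by
  simp only [CAperiodic, not_forall, not_lt] at hua
  obtain ⟨A, hA, w, hw, hwua, ⟨k, hwk⟩, hlen⟩ := hua
  obtain ⟨x, hx⟩ : w <:+ u ++ [a] := (List.infix_concat_iff.mp hwua).resolve_right fun hwu =>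
    (hu A hA w hw hwu ⟨k, hwk⟩).not_ge hlen
  set p := A.length
  have hpw : p ≤ w.length := by
    have : (p : ℝ) ≤ w.length := by nlinarith [(Nat.cast_nonneg p : (0 : ℝ) ≤ p)]
    exact_mod_cast this
  have hd : ⌈ε * p⌉₊ ≤ w.length - p := Nat.ceil_le.mpr (by push_cast [hpw]; linarith)
  refine ⟨p, List.length_pos_iff.mpr hA, x ++ w.take (w.length - (p + ⌈ε * p⌉₊)),
    w.drop (w.length - (p + ⌈ε * p⌉₊)), by simp [← hx], by simp only [List.length_drop]; omega,
    ((hasPeriod_listPow A k).infix hwk).infix (List.drop_suffix _ _).isInfix⟩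

end Aperiodic

section Counting

open Finset Classical

variable {m : ℕ}

theorem finite_setOf_length_eq_and_caperiodic (m : ℕ) (c : ℝ) (n : ℕ) :
    {v : List (Fin m) | v.length = n ∧ CAperiodic c v}.Finite :=
  (List.finite_length_eq (Fin m) n).subset fun _ hv => hv.1

def aperiodicWords (m : ℕ) (c : ℝ) (n : ℕ) : Finset (List (Fin m)) :=
  (finite_setOf_length_eq_and_caperiodic m c n).toFinset

variable {c : ℝ}

@[simp]
theorem mem_aperiodicWords {n : ℕ} {v : List (Fin m)} :
    v ∈ aperiodicWords m c n ↔ v.length = n ∧ CAperiodic c v :=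
  Set.Finite.mem_toFinset _

theorem card_aperiodicWords_mono {c' : ℝ} (hcc : c ≤ c') (n : ℕ) :
    (aperiodicWords m c n).card ≤ (aperiodicWords m c' n).card :=
  card_le_card fun _ hv => by
    rw [mem_aperiodicWords] at hv ⊢
    exact ⟨hv.1, hv.2.mono hcc⟩

theorem le_card_aperiodicWords_one (hc : 1 < c) : m ≤ (aperiodicWords m c 1).card := by
  simpa using card_le_card_of_injOn (s := univ) (fun a : Fin m => [a])
    (fun a _ => mem_aperiodicWords.mpr ⟨rfl, caperiodic_singleton hc a⟩)
    (fun a _ b _ hab => List.singleton_inj.mp hab)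

theorem append_singleton_injective :
    Function.Injective fun q : List (Fin m) × Fin m => q.1 ++ [q.2] := by
  intro q q' h
  obtain ⟨h₁, h₂⟩ := List.append_inj' h rfl
  exact Prod.ext h₁ (List.singleton_inj.mp h₂)

theorem card_filter_caperiodic_append_le (i : ℕ) :
    ((aperiodicWords m c i ×ˢ (univ : Finset (Fin m))).filter
        fun q => CAperiodic c (q.1 ++ [q.2])).card ≤
      (aperiodicWords m c (i + 1)).card := by
  refine card_le_card_of_injOn _ (fun q hq => ?_) append_singleton_injective.injOn
  simp only [coe_filter, mem_product, mem_aperiodicWords, mem_univ, and_true,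
    Set.mem_ofPred_eq] at hq
  simpa [mem_aperiodicWords, hq.1.1] using hq.2

/-- Within a periodic suffix the last `d` letters are determined by the earlier ones, so
deleting them loses no information. -/
theorem card_filter_hasPeriodicSuffix_le {p d : ℕ} (hp : 0 < p) (hd : 0 < d) (i : ℕ) :
    ((aperiodicWords m c i ×ˢ (univ : Finset (Fin m))).filter
        fun q => HasPeriodicSuffix p d (q.1 ++ [q.2])).card ≤
      (aperiodicWords m c (i + 1 - d)).card := by
  have htake : ∀ q ∈ aperiodicWords m c i ×ˢ univ,
      (q.1 ++ [q.2]).take ((q.1 ++ [q.2]).length - d) = q.1.take (i + 1 - d) := by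
    intro q hq
    rw [mem_product, mem_aperiodicWords] at hq
    rw [List.length_append, hq.1.1, List.length_singleton,
      List.take_append_of_le_length (by omega)]
  refine card_le_card_of_injOn (fun q => q.1.take (i + 1 - d)) (fun q hq => ?_)
    (fun q hq q' hq' hqq' => ?_)
  · rw [coe_filter, Set.mem_ofPred_eq, mem_product, mem_aperiodicWords] at hq
    rw [mem_coe, mem_aperiodicWords, List.length_take, hq.1.1.1]
    exact ⟨by omega, hq.1.1.2.infix (List.take_prefix _ _).isInfix⟩
  · rw [coe_filter, Set.mem_ofPred_eq] at hq hq'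
    apply append_singleton_injective
    refine hq.2.eq_of_take_eq hp hq'.2 ?_ ((htake q hq.1).trans (hqq'.trans (htake q' hq'.1).symm))
    simp only [List.length_append, (mem_aperiodicWords.mp (mem_product.mp hq.1).1).1,
      (mem_aperiodicWords.mp (mem_product.mp hq'.1).1).1, List.length_singleton]

/-- An extension `u ++ [a]` that is not aperiodic has a periodic suffix, and is counted through
its shorter prefix. -/
theorem mul_card_aperiodicWords_le {ε : ℝ} (hε : 0 < ε) (i : ℕ) :
    m * (aperiodicWords m (1 + ε) i).card ≤ (aperiodicWords m (1 + ε) (i + 1)).card +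
      ∑ p ∈ (Icc 1 (i + 1)).filter (fun p : ℕ => p + ⌈ε * p⌉₊ ≤ i + 1),
        (aperiodicWords m (1 + ε) (i + 1 - ⌈ε * p⌉₊)).card := by
  set S := aperiodicWords m (1 + ε) i ×ˢ (univ : Finset (Fin m))
  have hdpos : ∀ p : ℕ, 0 < p → 0 < ⌈ε * p⌉₊ := fun p hp =>
    Nat.ceil_pos.mpr (mul_pos hε (Nat.cast_pos.mpr hp))
  have hbad : S.filter (fun q => ¬ CAperiodic (1 + ε) (q.1 ++ [q.2])) ⊆
      ((Icc 1 (i + 1)).filter (fun p : ℕ => p + ⌈ε * p⌉₊ ≤ i + 1)).biUnion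
        fun p : ℕ => S.filter fun q => HasPeriodicSuffix p ⌈ε * p⌉₊ (q.1 ++ [q.2]) := by
    intro q hq
    rw [mem_filter, mem_product, mem_aperiodicWords] at hq
    obtain ⟨p, hp, hpq⟩ := exists_hasPeriodicSuffix_of_not_caperiodic_append hε.le hq.1.1.2 hq.2
    have hlen := hpq.add_le_length
    rw [List.length_append, hq.1.1.1, List.length_singleton] at hlen
    have := hdpos p hp
    exact mem_biUnion.mpr ⟨p, mem_filter.mpr ⟨mem_Icc.mpr ⟨hp, by omega⟩, hlen⟩,
      mem_filter.mpr ⟨mem_product.mpr ⟨mem_aperiodicWords.mpr hq.1.1, mem_univ _⟩, hpq⟩⟩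
  calc m * (aperiodicWords m (1 + ε) i).card = S.card := by simp [S, mul_comm]
    _ = (S.filter fun q => CAperiodic (1 + ε) (q.1 ++ [q.2])).card +
        (S.filter fun q => ¬ CAperiodic (1 + ε) (q.1 ++ [q.2])).card :=
      (card_filter_add_card_filter_not _).symm
    _ ≤ _ := add_le_add (card_filter_caperiodic_append_le i) <|
      (card_le_card hbad).trans <| card_biUnion_le.trans <| sum_le_sum fun p hp =>
        card_filter_hasPeriodicSuffix_le (mem_Icc.mp (mem_filter.mp hp).1).1
          (hdpos p (mem_Icc.mp (mem_filter.mp hp).1).1) i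

end Counting

section Growth

open Finset

theorem pow_mul_le_of_forall_lt {f : ℕ → ℝ} {β : ℝ} (hβ : 0 ≤ β) {n : ℕ}
    (hstep : ∀ j < n, β * f j ≤ f (j + 1)) {a b : ℕ} (hab : a + b ≤ n) :
    β ^ b * f a ≤ f (a + b) := by
  induction b with
  | zero => simp
  | succ b ih =>
    calc β ^ (b + 1) * f a = β * (β ^ b * f a) := by ring
      _ ≤ β * f (a + b) := mul_le_mul_of_nonneg_left (ih (by omega)) hβ
      _ ≤ f (a + b + 1) := hstep _ (by omega)

theorem sum_Icc_one_quarter_pow_le (n : ℕ) : ∑ p ∈ Icc 1 n, (1 / 4 : ℝ) ^ p ≤ 1 / 3 := by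
  rw [← Finset.Ico_add_one_right_eq_Icc]
  exact (geom_sum_Ico_le_of_lt_one (by norm_num) (by norm_num)).trans_eq (by norm_num)

/-- By induction `f (i + 1 - d p) ≤ f i · β / 4 ^ p`, and these terms sum to at most
`f i · β / 3`. -/
theorem mul_le_of_le_add_sum {f : ℕ → ℝ} {d : ℕ → ℕ} {β M : ℝ} (hβ : 0 < β) (hM : 4 * β ≤ M)
    (hf : ∀ i, 0 ≤ f i) (hd : ∀ p, 0 < p → 0 < d p) (hdβ : ∀ p, 0 < p → (4 : ℝ) ^ p ≤ β ^ d p)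
    (hrec : ∀ i, M * f i ≤
      f (i + 1) + ∑ p ∈ (Icc 1 (i + 1)).filter (fun p => p + d p ≤ i + 1), f (i + 1 - d p))
    (i : ℕ) : β * f i ≤ f (i + 1) := by
  induction i using Nat.strong_induction_on with
  | _ i ih =>
    set P := (Icc 1 (i + 1)).filter (fun p => p + d p ≤ i + 1)
    have hterm : ∀ p ∈ P, f (i + 1 - d p) ≤ β * f i * (1 / 4) ^ p := by
      intro p hp
      obtain ⟨hp1, hpd⟩ := mem_filter.mp hp
      have hp0 : 0 < p := (mem_Icc.mp hp1).1
      have hd0 := hd p hp0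
      have hchain := pow_mul_le_of_forall_lt hβ.le ih (a := i + 1 - d p) (b := d p - 1) (by omega)
      rw [show i + 1 - d p + (d p - 1) = i by omega] at hchain
      have h4 : (0 : ℝ) < 4 ^ p := by positivity
      calc f (i + 1 - d p) = (4 ^ p)⁻¹ * (4 ^ p * f (i + 1 - d p)) := by field_simp
        _ ≤ (4 ^ p)⁻¹ * (β ^ d p * f (i + 1 - d p)) := by
          gcongr
          exacts [hf _, hdβ p hp0]
        _ = (4 ^ p)⁻¹ * (β * (β ^ (d p - 1) * f (i + 1 - d p))) := by
          rw [← mul_assoc β, ← pow_succ', Nat.sub_add_cancel hd0]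
        _ ≤ (4 ^ p)⁻¹ * (β * f i) := by gcongr
        _ = β * f i * (1 / 4) ^ p := by rw [one_div_pow, one_div]; ring
    have hsum : ∑ p ∈ P, f (i + 1 - d p) ≤ β * f i * (1 / 3) :=
      calc ∑ p ∈ P, f (i + 1 - d p) ≤ ∑ p ∈ P, β * f i * (1 / 4) ^ p := sum_le_sum hterm
        _ = β * f i * ∑ p ∈ P, (1 / 4 : ℝ) ^ p := by rw [mul_sum]
        _ ≤ β * f i * ∑ p ∈ Icc 1 (i + 1), (1 / 4 : ℝ) ^ p := by
          gcongr
          · exact mul_nonneg hβ.le (hf i)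
          · exact filter_subset _ _
        _ ≤ β * f i * (1 / 3) := by
          gcongr
          · exact mul_nonneg hβ.le (hf i)
          · exact sum_Icc_one_quarter_pow_le _
    have := mul_le_mul_of_nonneg_right hM (hf i)
    nlinarith [hrec i, mul_nonneg hβ.le (hf i)]

end Growth

section Parameters

theorem one_lt_of_four_le_rpow {x r : ℝ} (hx : 0 ≤ x) (hr : 0 ≤ r) (h : 4 ≤ x ^ r) : 1 < x := by
  by_contra! hx1
  linarith [Real.rpow_le_one hx hx1 hr]

theorem exists_nat_four_le_rpow {r : ℝ} (hr : 0 < r) : ∃ m : ℕ, 4 ≤ (m : ℝ) ^ r := by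
  refine ⟨⌈(4 : ℝ) ^ r⁻¹⌉₊, ?_⟩
  calc (4 : ℝ) = ((4 : ℝ) ^ r⁻¹) ^ r := by
        rw [← Real.rpow_mul (by norm_num), inv_mul_cancel₀ hr.ne', Real.rpow_one]
    _ ≤ _ := Real.rpow_le_rpow (by positivity) (Nat.le_ceil _) hr.le

theorem four_pow_le_pow_ceil {ε β : ℝ} (hβ : 1 ≤ β) (h4 : 4 ≤ β ^ ε) (p : ℕ) :
    (4 : ℝ) ^ p ≤ β ^ ⌈ε * p⌉₊ :=
  calc (4 : ℝ) ^ p ≤ (β ^ ε) ^ p := pow_le_pow_left₀ (by norm_num) h4 p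
    _ = β ^ (ε * p) := by rw [Real.rpow_mul (by linarith), Real.rpow_natCast]
    _ ≤ β ^ (⌈ε * p⌉₊ : ℝ) := Real.rpow_le_rpow_of_exponent_le hβ (Nat.le_ceil _)
    _ = β ^ ⌈ε * p⌉₊ := Real.rpow_natCast _ _

end Parameters

/-- With `β = m ^ (1 - ε/2)`, the condition `m ^ (ε/2) ≥ 4` gives both `4 β ≤ m` and
(as `ε ≤ 1`) `β ^ ε ≥ 4`. -/
theorem rpow_lt_card_aperiodicWords {ε : ℝ} (hε : 0 < ε) (hε1 : ε ≤ 1) {m : ℕ}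
    (hm : 4 ≤ (m : ℝ) ^ (ε / 2)) {i : ℕ} (hi : 0 < i) :
    (m : ℝ) ^ ((1 - ε / 2) * i) < (aperiodicWords m (1 + ε) i).card := by
  have hm0 : (0 : ℝ) ≤ m := Nat.cast_nonneg m
  have hm1 : 1 < (m : ℝ) := one_lt_of_four_le_rpow hm0 (by positivity) hm
  set β := (m : ℝ) ^ (1 - ε / 2)
  have hβ1 : 1 ≤ β := Real.one_le_rpow hm1.le (by linarith)
  have hβm : β < m := by
    simpa using Real.rpow_lt_rpow_of_exponent_lt hm1 (show 1 - ε / 2 < 1 by linarith)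
  have h4β : 4 * β ≤ m := by
    calc 4 * β ≤ (m : ℝ) ^ (ε / 2) * β := by gcongr
      _ = m := by rw [← Real.rpow_add (by linarith), add_sub_cancel, Real.rpow_one]
  have hβε : 4 ≤ β ^ ε :=
    calc (4 : ℝ) ≤ (m : ℝ) ^ (ε / 2) := hm
      _ ≤ (m : ℝ) ^ ((1 - ε / 2) * ε) := Real.rpow_le_rpow_of_exponent_le hm1.le (by nlinarith)
      _ = β ^ ε := Real.rpow_mul hm0 _ _
  have hgrowth := mul_le_of_le_add_sum (by positivity) h4β (fun _ => Nat.cast_nonneg _)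
    (fun p hp => Nat.ceil_pos.mpr (mul_pos hε (Nat.cast_pos.mpr hp)))
    (fun p _ => four_pow_le_pow_ceil hβ1 hβε p)
    (fun i => by exact_mod_cast mul_card_aperiodicWords_le (m := m) hε i)
  have hchain := pow_mul_le_of_forall_lt (by positivity) (fun j _ => hgrowth j)
    (a := 1) (b := i - 1) le_rfl
  rw [Nat.add_sub_cancel' hi] at hchain
  calc (m : ℝ) ^ ((1 - ε / 2) * i) = β ^ (i - 1) * β := by
        rw [← pow_succ, Nat.sub_add_cancel hi, Real.rpow_mul hm0, Real.rpow_natCast]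
    _ < β ^ (i - 1) * m := by gcongr
    _ ≤ β ^ (i - 1) * (aperiodicWords m (1 + ε) 1).card := by
        gcongr
        exact_mod_cast le_card_aperiodicWords_one (by linarith)
    _ ≤ _ := hchain

/-- For every `ε > 0` there is `m = m(ε)` such that for all
`i ≥ 1` the number of positive `(1+ε)`-aperiodic words of length `i` over an
`m`-letter alphabet is greater than `m^((1-ε/2)·i)`; in particular the set of
positive `(1+ε)`-aperiodic words over the alphabet is infinite. -/
theorem statement1 (ε : ℝ) (hε : 0 < ε) :
    ∃ m : ℕ, 0 < m ∧
      (∀ i : ℕ, 1 ≤ i →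
        ((m : ℝ) ^ (((1 : ℝ) - ε / 2) * (i : ℝ)) <
          (Nat.card {v : List (Fin m) // v.length = i ∧ CAperiodic (1 + ε) v} : ℝ))) ∧
      {v : List (Fin m) | CAperiodic (1 + ε) v}.Infinite := by
  -- the counting argument needs `ε ≤ 1`; aperiodicity only gets weaker as `ε` grows
  set ε' := min ε 1
  have hε' : 0 < ε' := lt_min hε one_pos
  obtain ⟨m, hm⟩ := exists_nat_four_le_rpow (half_pos hε')
  have hm1 : 1 < (m : ℝ) := one_lt_of_four_le_rpow (Nat.cast_nonneg m) (by positivity) hm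
  have hcard : ∀ i : ℕ, 0 < i →
      (m : ℝ) ^ ((1 - ε / 2) * i) < (aperiodicWords m (1 + ε) i).card := fun i hi =>
    calc (m : ℝ) ^ ((1 - ε / 2) * i) ≤ (m : ℝ) ^ ((1 - ε' / 2) * i) :=
          Real.rpow_le_rpow_of_exponent_le hm1.le
            (by gcongr; exact min_le_left _ _)
      _ < (aperiodicWords m (1 + ε') i).card :=
          rpow_lt_card_aperiodicWords hε' (min_le_right _ _) hm hi
      _ ≤ (aperiodicWords m (1 + ε) i).card := by
          exact_mod_cast card_aperiodicWords_mono (by simp [ε']) i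
  refine ⟨m, by exact_mod_cast hm1.trans' one_pos, fun i hi => ?_, ?_⟩
  · exact (Nat.card_eq_card_finite_toFinset
      (finite_setOf_length_eq_and_caperiodic m (1 + ε) i)).symm ▸ hcard i hi
  · refine Set.Infinite.of_image List.length ((Set.Ici_infinite 1).mono fun i hi => ?_)
    obtain ⟨v, hv⟩ := Finset.card_pos.mp (Nat.cast_pos.mp ((hcard i hi).trans' (by positivity)))
    exact ⟨v, (mem_aperiodicWords.mp hv).2, (mem_aperiodicWords.mp hv).1⟩

end OlshanskiiSapir
end
end

section
/- Suppose R satisfies (Z1.1). If g ∈ G(0) is cyclically Y-reduced (i.e. |g²|_Y = 2|g|_Y) then for every integer m, |gᵐ|_Y = |m|·|g|_Y, and gᵐ is cyclically Y-reduced. -/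
/-!
Let `H` be the subgroup generated by the `0`-elements. Words act on `G × F(E)`, where `E` is
the set of edges (pairs of right cosets) of the Schreier graph of `H`: a letter `x` sends
`(h, ξ)` to `(x h, ξ)`, and to `(x h, (H h, H x h) ξ)` when `x ∈ Y`. Under (Z1.1) the relators
act trivially, since in `a y₁ b y₂⁻¹` the edge pushed by `y₁` is the one popped by `y₂`. So
the free-group coordinate reached from `(h, 1)`, the stack word, depends only on the value of
the word in `G`, and its length bounds the `Y`-length from below. Consequently a word is
`Y`-geodesic iff its stack word is reduced: a cancellation between consecutive `Y`-letters
`p u q` forces `p u q ∈ H`. If `l` is geodesic for `g` and `|g²|_Y = 2|g|_Y`, then `l l` is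
geodesic, and the stack word of `lᵏ` is reduced because every pair of adjacent letters in it
lies in a stack word of `l l`.
-/

open scoped Classical

noncomputable section

namespace OlshanskiiSapir

/-- The number of occurrences of letters from `Y` (with either exponent `±1`)
in a word over the alphabet `X`. -/
def wordYLen {X : Type} (Y : Set X) (l : List (X × Bool)) : ℕ :=
  (l.filter fun p => decide (p.1 ∈ Y)).length

/-- The `Y`-length of an element of the free group: the minimal number of
`Y`-letters occurring in a word representing it. -/
def fYLen {X : Type} (Y : Set X) (w : FreeGroup X) : ℕ :=
  sInf {k | ∃ l : List (X × Bool), FreeGroup.mk l = w ∧ wordYLen Y l = k}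

/-- The `Y`-length of an element `g` of a group `G` marked by an epimorphism
`π : FreeGroup X →* G`: the minimal number of `Y`-letters in a word representing `g`. -/
def yLen {X G : Type} [Group G] (Y : Set X) (π : FreeGroup X →* G) (g : G) : ℕ :=
  sInf {k | ∃ l : List (X × Bool), π (FreeGroup.mk l) = g ∧ wordYLen Y l = k}

/-- Condition (Z1.1): every relator either has `Y`-length `0` or, up to cyclic
shift (i.e. up to conjugacy), has the form `a * y₁ * b * y₂⁻¹` with `y₁, y₂ ∈ Y`
and `a`, `b` of `Y`-length `0`. -/
def Z11 {X : Type} (Y : Set X) (R : Set (FreeGroup X)) : Prop :=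
  ∀ r ∈ R, fYLen Y r = 0 ∨
    ∃ a b : FreeGroup X, ∃ y₁ ∈ Y, ∃ y₂ ∈ Y,
      fYLen Y a = 0 ∧ fYLen Y b = 0 ∧
      IsConj (a * FreeGroup.of y₁ * b * (FreeGroup.of y₂)⁻¹) r

/-- An element of `G` is essential if no conjugate of it is a `0`-element
(an element of `Y`-length `0`). -/
def Essential {X G : Type} [Group G] (Y : Set X) (π : FreeGroup X →* G) (g : G) : Prop :=
  ∀ h : G, yLen Y π (h * g * h⁻¹) ≠ 0

/-- `OSub Y π g`: the maximal subgroup consisting of `0`-elements which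
contains `g` in its normalizer. -/
def OSub {X G : Type} [Group G] (Y : Set X) (π : FreeGroup X →* G) (g : G) : Subgroup G :=
  sSup {H : Subgroup G | (∀ x ∈ H, yLen Y π x = 0) ∧ g ∈ Subgroup.normalizer (H : Set G)}


end OlshanskiiSapir

namespace FreeGroup

lemma mk_singleton_false {α : Type*} (a : α) :
    mk [(a, false)] = (of a)⁻¹ := by
  rw [of, inv_mk]; rfl

lemma mk_flatten_replicate {α : Type*} (k : ℕ) (l : List (α × Bool)) :
    mk (List.replicate k l).flatten = mk l ^ k := by
  induction k with
  | zero => simp [one_eq_mk]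
  | succ k ih => rw [List.replicate_succ, List.flatten_cons, ← mul_mk, ih, pow_succ']

end FreeGroup

namespace OlshanskiiSapir

section YLength

variable {X G : Type} [Group G] (Y : Set X) (π : FreeGroup X →* G)

lemma wordYLen_append (l₁ l₂ : List (X × Bool)) :
    wordYLen Y (l₁ ++ l₂) = wordYLen Y l₁ + wordYLen Y l₂ := by
  simp [wordYLen, List.filter_append]

lemma wordYLen_cons (p : X × Bool) (l : List (X × Bool)) :
    wordYLen Y (p :: l) = (if p.1 ∈ Y then 1 else 0) + wordYLen Y l := by
  by_cases h : p.1 ∈ Y <;> simp [wordYLen, h, Nat.add_comm]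

lemma wordYLen_invRev (l : List (X × Bool)) :
    wordYLen Y (FreeGroup.invRev l) = wordYLen Y l := by
  simp [wordYLen, FreeGroup.invRev, List.filter_reverse, List.filter_map, Function.comp_def]

lemma wordYLen_flatten_replicate (k : ℕ) (l : List (X × Bool)) :
    wordYLen Y (List.replicate k l).flatten = k * wordYLen Y l := by
  induction k with
  | zero => simp [wordYLen]
  | succ k ih => rw [List.replicate_succ, List.flatten_cons, wordYLen_append, ih]; ring

lemma exists_eq_append_cons_of_wordYLen_ne_zero :
    ∀ {l : List (X × Bool)}, wordYLen Y l ≠ 0 →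
      ∃ u p l', l = u ++ p :: l' ∧ wordYLen Y u = 0 ∧ p.1 ∈ Y
  | [], h => absurd rfl h
  | p :: l, h => by
    by_cases hp : p.1 ∈ Y
    · exact ⟨[], p, l, rfl, rfl, hp⟩
    · rw [wordYLen_cons, if_neg hp, zero_add] at h
      obtain ⟨u, q, l', rfl, hu, hq⟩ := exists_eq_append_cons_of_wordYLen_ne_zero h
      exact ⟨p :: u, q, l', rfl, by rw [wordYLen_cons, if_neg hp, hu], hq⟩

lemma yLen_le_wordYLen {l : List (X × Bool)} {g : G} (h : π (FreeGroup.mk l) = g) :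
    yLen Y π g ≤ wordYLen Y l :=
  Nat.sInf_le ⟨l, h, rfl⟩

lemma exists_wordYLen_eq_yLen (hπ : Function.Surjective π) (g : G) :
    ∃ l, π (FreeGroup.mk l) = g ∧ wordYLen Y l = yLen Y π g := by
  obtain ⟨w, rfl⟩ := hπ g
  have hne : {k | ∃ l, π (FreeGroup.mk l) = π w ∧ wordYLen Y l = k}.Nonempty :=
    ⟨_, w.toWord, by rw [FreeGroup.mk_toWord], rfl⟩
  exact Nat.sInf_mem hne

lemma yLen_one : yLen Y π 1 = 0 :=
  Nat.le_zero.1 (yLen_le_wordYLen Y π (l := []) (by rw [← FreeGroup.one_eq_mk, map_one]))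

lemma yLen_mul_le (hπ : Function.Surjective π) (g h : G) :
    yLen Y π (g * h) ≤ yLen Y π g + yLen Y π h := by
  obtain ⟨l₁, rfl, e₁⟩ := exists_wordYLen_eq_yLen Y π hπ g
  obtain ⟨l₂, rfl, e₂⟩ := exists_wordYLen_eq_yLen Y π hπ h
  rw [← e₁, ← e₂, ← wordYLen_append, ← map_mul, FreeGroup.mul_mk]
  exact yLen_le_wordYLen Y π rfl

lemma yLen_inv (hπ : Function.Surjective π) (g : G) : yLen Y π g⁻¹ = yLen Y π g := by
  have key (g : G) : yLen Y π g⁻¹ ≤ yLen Y π g := by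
    obtain ⟨l, rfl, e⟩ := exists_wordYLen_eq_yLen Y π hπ g
    rw [← e, ← wordYLen_invRev, ← map_inv, FreeGroup.inv_mk]
    exact yLen_le_wordYLen Y π rfl
  exact le_antisymm (key g) (by simpa using key g⁻¹)

lemma exists_mk_eq_of_fYLen_eq_zero {w : FreeGroup X} (h : fYLen Y w = 0) :
    ∃ l, FreeGroup.mk l = w ∧ wordYLen Y l = 0 := by
  have hne : {k | ∃ l, FreeGroup.mk l = w ∧ wordYLen Y l = k}.Nonempty :=
    ⟨_, w.toWord, FreeGroup.mk_toWord, rfl⟩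
  exact h ▸ Nat.sInf_mem hne

lemma yLen_map_eq_zero {w : FreeGroup X} (h : fYLen Y w = 0) : yLen Y π (π w) = 0 := by
  obtain ⟨l, rfl, hl⟩ := exists_mk_eq_of_fYLen_eq_zero Y h
  exact Nat.le_zero.1 (hl ▸ yLen_le_wordYLen Y π rfl)

def zeroSubgroup : Subgroup G := Subgroup.closure {g | yLen Y π g = 0}

lemma yLen_eq_zero_of_mem_zeroSubgroup (hπ : Function.Surjective π) {g : G}
    (hg : g ∈ zeroSubgroup Y π) : yLen Y π g = 0 := by
  induction hg using Subgroup.closure_induction with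
  | mem x hx => exact hx
  | one => exact yLen_one Y π
  | mul x y _ _ hx hy => have := yLen_mul_le Y π hπ x y; omega
  | inv x _ hx => rwa [yLen_inv Y π hπ]

def IsYGeodesic (l : List (X × Bool)) : Prop :=
  yLen Y π (π (FreeGroup.mk l)) = wordYLen Y l

lemma IsYGeodesic.of_append (hπ : Function.Surjective π) {l₁ l₂ : List (X × Bool)}
    (h : IsYGeodesic Y π (l₁ ++ l₂)) : IsYGeodesic Y π l₁ ∧ IsYGeodesic Y π l₂ := by
  have hle := yLen_mul_le Y π hπ (π (FreeGroup.mk l₁)) (π (FreeGroup.mk l₂))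
  have h₁ := yLen_le_wordYLen Y π (l := l₁) rfl
  have h₂ := yLen_le_wordYLen Y π (l := l₂) rfl
  rw [← map_mul, FreeGroup.mul_mk, h, wordYLen_append] at hle
  unfold IsYGeodesic
  omega

lemma IsYGeodesic.wordYLen_eq_zero (hπ : Function.Surjective π) {l : List (X × Bool)}
    (h : IsYGeodesic Y π l) (hl : π (FreeGroup.mk l) ∈ zeroSubgroup Y π) : wordYLen Y l = 0 :=
  h ▸ yLen_eq_zero_of_mem_zeroSubgroup Y π hπ hl

end YLength

section StackModel

variable {X G : Type} [Group G] (H : Subgroup G) (Y : Set X) (π : FreeGroup X →* G)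

abbrev Edge : Type := Quotient (QuotientGroup.rightRel H) × Quotient (QuotientGroup.rightRel H)

def edge (a b : G) : Edge H := (Quotient.mk _ a, Quotient.mk _ b)

lemma edge_eq_edge_iff {a b c d : G} :
    edge H a b = edge H c d ↔ c * a⁻¹ ∈ H ∧ d * b⁻¹ ∈ H := by
  simp [edge, Quotient.eq, QuotientGroup.rightRel_apply]

def edgeStep (x : G) : Equiv.Perm (G × FreeGroup (Edge H)) where
  toFun p := (x * p.1, FreeGroup.of (edge H p.1 (x * p.1)) * p.2)
  invFun p := (x⁻¹ * p.1, (FreeGroup.of (edge H (x⁻¹ * p.1) p.1))⁻¹ * p.2)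
  left_inv p := by simp
  right_inv p := by simp

lemma edgeStep_apply (x g : G) (ξ : FreeGroup (Edge H)) :
    edgeStep H x (g, ξ) = (x * g, FreeGroup.of (edge H g (x * g)) * ξ) := rfl

lemma edgeStep_inv_apply (x g : G) (ξ : FreeGroup (Edge H)) :
    (edgeStep H x)⁻¹ (g, ξ) = (x⁻¹ * g, (FreeGroup.of (edge H (x⁻¹ * g) g))⁻¹ * ξ) :=
  rfl

def generatorStep (x : X) : Equiv.Perm (G × FreeGroup (Edge H)) :=
  if x ∈ Y then edgeStep H (π (FreeGroup.of x))
  else (Equiv.mulLeft (π (FreeGroup.of x))).prodCongr (Equiv.refl _)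

def stackAction : FreeGroup X →* Equiv.Perm (G × FreeGroup (Edge H)) :=
  FreeGroup.lift (generatorStep H Y π)

lemma stackAction_of_mem {x : X} (hx : x ∈ Y) :
    stackAction H Y π (FreeGroup.of x) = edgeStep H (π (FreeGroup.of x)) := by
  rw [stackAction, FreeGroup.lift_apply_of, generatorStep, if_pos hx]

/-- The edge traversed by the letter `p` when the word is read from right to left and the
`G`-coordinate before `p` is `g`; a letter `x⁻¹` traverses its edge backwards. -/
def stackLetter (p : X × Bool) (g : G) : Edge H × Bool :=
  (if p.2 then edge H g (π (FreeGroup.mk [p]) * g) else edge H (π (FreeGroup.mk [p]) * g) g, p.2)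

def stackWord : List (X × Bool) → G → List (Edge H × Bool)
  | [], _ => []
  | p :: l, g =>
    if p.1 ∈ Y then stackLetter H π p (π (FreeGroup.mk l) * g) :: stackWord l g
    else stackWord l g

lemma length_stackWord (l : List (X × Bool)) (g : G) :
    (stackWord H Y π l g).length = wordYLen Y l := by
  induction l with
  | nil => rfl
  | cons p l ih => by_cases hp : p.1 ∈ Y <;> simp [stackWord, wordYLen_cons, hp, ih, add_comm]

lemma stackWord_append (l₁ l₂ : List (X × Bool)) (g : G) :
    stackWord H Y π (l₁ ++ l₂) g
      = stackWord H Y π l₁ (π (FreeGroup.mk l₂) * g) ++ stackWord H Y π l₂ g := by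
  induction l₁ with
  | nil => rfl
  | cons p l ih =>
    by_cases hp : p.1 ∈ Y
    · simp [stackWord, hp, ih, ← FreeGroup.mul_mk, mul_assoc]
    · simp [stackWord, hp, ih]

lemma stackAction_mk_singleton_apply (p : X × Bool) (g : G) (ξ : FreeGroup (Edge H)) :
    stackAction H Y π (FreeGroup.mk [p]) (g, ξ)
      = (π (FreeGroup.mk [p]) * g, FreeGroup.mk (stackWord H Y π [p] g) * ξ) := by
  obtain ⟨x, _ | _⟩ := p
  · by_cases hY : x ∈ Y
    · simp [stackAction, generatorStep, stackWord, stackLetter, FreeGroup.mk_singleton_false, hY,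
        edgeStep_inv_apply, ← FreeGroup.one_eq_mk]
    · simp [stackAction, generatorStep, stackWord, FreeGroup.mk_singleton_false, hY,
        ← FreeGroup.one_eq_mk]
  · by_cases hY : x ∈ Y
    · simp [stackAction, generatorStep, stackWord, stackLetter, hY, edgeStep, FreeGroup.of,
        ← FreeGroup.one_eq_mk]
    · simp [stackAction, generatorStep, stackWord, hY, FreeGroup.of, ← FreeGroup.one_eq_mk]

lemma stackAction_mk_apply (l : List (X × Bool)) (g : G) (ξ : FreeGroup (Edge H)) :
    stackAction H Y π (FreeGroup.mk l) (g, ξ)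
      = (π (FreeGroup.mk l) * g, FreeGroup.mk (stackWord H Y π l g) * ξ) := by
  induction l with
  | nil => simp [← FreeGroup.one_eq_mk, stackWord]
  | cons p l ih =>
    rw [← List.singleton_append, ← FreeGroup.mul_mk, map_mul, Equiv.Perm.mul_apply, ih,
      stackAction_mk_singleton_apply, stackWord_append, ← FreeGroup.mul_mk, map_mul,
      mul_assoc, mul_assoc]

lemma mul_mem_of_stackLetter_fst_eq {p p' : X × Bool} (hne : p.2 ≠ p'.2)
    {c g : G} (h : (stackLetter H π p (c * g)).1 = (stackLetter H π p' g).1) :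
    π (FreeGroup.mk [p]) * c ∈ H := by
  obtain ⟨x, _ | _⟩ := p <;> obtain ⟨x', _ | _⟩ := p' <;>
    simp only [ne_eq, not_true] at hne <;>
    simp only [stackLetter, edge_eq_edge_iff, Bool.false_eq_true, if_true, if_false] at h
  · convert H.inv_mem h.1 using 1; group
  · convert H.inv_mem h.2 using 1; group

lemma isReduced_stackWord_append_flatten_replicate {l : List (X × Bool)}
    (hl : ∀ g, FreeGroup.IsReduced (stackWord H Y π (l ++ l) g)) (k : ℕ) (g : G) :
    FreeGroup.IsReduced (stackWord H Y π (l ++ (List.replicate k l).flatten) g) := by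
  induction k with
  | zero =>
    simpa using (hl g).infix ⟨stackWord H Y π l (π (FreeGroup.mk l) * g), [], by
      rw [stackWord_append, List.append_nil]⟩
  | succ k ih =>
    rw [List.replicate_succ, List.flatten_cons]
    generalize (List.replicate k l).flatten = L at ih ⊢
    rw [stackWord_append, stackWord_append]
    rw [stackWord_append] at ih
    have hbase :
        π (FreeGroup.mk (l ++ L)) * g = π (FreeGroup.mk l) * (π (FreeGroup.mk L) * g) := by
      rw [← FreeGroup.mul_mk, map_mul, mul_assoc]
    have hll := hl (π (FreeGroup.mk L) * g)
    rw [stackWord_append] at hll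
    rw [hbase, ← List.append_assoc]
    rcases eq_or_ne (stackWord H Y π l (π (FreeGroup.mk L) * g)) [] with hB | hB
    · have hA : stackWord H Y π l (π (FreeGroup.mk l) * (π (FreeGroup.mk L) * g)) = [] := by
        rw [← List.length_eq_zero_iff, length_stackWord, ← length_stackWord H Y π l, hB]
        rfl
      simpa [hA, hB] using ih
    · exact hll.append_overlap ih hB

end StackModel

section Relators

variable {X G : Type} [Group G] (H : Subgroup G) (Y : Set X) (π : FreeGroup X →* G)

lemma stackAction_apply_of_fYLen_eq_zero {w : FreeGroup X} (hw : fYLen Y w = 0) (g : G)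
    (ξ : FreeGroup (Edge H)) : stackAction H Y π w (g, ξ) = (π w * g, ξ) := by
  obtain ⟨l, rfl, hl⟩ := exists_mk_eq_of_fYLen_eq_zero Y hw
  rw [stackAction_mk_apply, List.eq_nil_of_length_eq_zero ((length_stackWord H Y π l g).trans hl),
    ← FreeGroup.one_eq_mk, one_mul]

variable (R : Set (FreeGroup X))

lemma stackAction_eq_one_of_mem (hH : ∀ w, fYLen Y w = 0 → π w ∈ H) (hZ : Z11 Y R)
    (hR : ∀ r ∈ R, π r = 1) {r : FreeGroup X} (hr : r ∈ R) : stackAction H Y π r = 1 := by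
  rcases hZ r hr with h0 | ⟨a, b, y₁, hy₁, y₂, hy₂, ha, hb, hconj⟩
  · ext ⟨g, ξ⟩ : 2 <;> simp [stackAction_apply_of_fYLen_eq_zero H Y π h0, hR r hr]
  have hcore : π a * π (FreeGroup.of y₁) * π b * (π (FreeGroup.of y₂))⁻¹ = 1 := by
    simpa [isConj_one_left, hR r hr] using π.map_isConj hconj
  suffices h1 : stackAction H Y π (a * FreeGroup.of y₁ * b * (FreeGroup.of y₂)⁻¹) = 1 from
    isConj_one_right.1 (h1 ▸ (stackAction H Y π).map_isConj hconj)
  have ha' : π a = (π (FreeGroup.of y₁) * π b * (π (FreeGroup.of y₂))⁻¹)⁻¹ := by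
    rw [eq_inv_iff_mul_eq_one, ← hcore]; group
  have hedge (g : G) : edge H (π b * ((π (FreeGroup.of y₂))⁻¹ * g))
      (π (FreeGroup.of y₁) * (π b * ((π (FreeGroup.of y₂))⁻¹ * g)))
      = edge H ((π (FreeGroup.of y₂))⁻¹ * g) g := by
    rw [edge_eq_edge_iff]
    constructor
    · simpa [mul_assoc] using H.inv_mem (hH b hb)
    · convert hH a ha using 1
      rw [ha']; group
  ext ⟨g, ξ⟩ : 1
  rw [map_mul, map_mul, map_mul, map_inv, stackAction_of_mem H Y π hy₁,
    stackAction_of_mem H Y π hy₂]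
  simp only [Equiv.Perm.mul_apply, edgeStep_inv_apply, edgeStep_apply, hedge,
    stackAction_apply_of_fYLen_eq_zero H Y π ha, stackAction_apply_of_fYLen_eq_zero H Y π hb,
    mul_inv_cancel_left, Equiv.Perm.one_apply, Prod.mk.injEq, and_true]
  rw [ha']
  group

lemma mk_stackWord_eq_of_map_eq (hH : ∀ w, fYLen Y w = 0 → π w ∈ H) (hZ : Z11 Y R)
    (hker : π.ker = Subgroup.normalClosure R) {l₁ l₂ : List (X × Bool)}
    (h : π (FreeGroup.mk l₁) = π (FreeGroup.mk l₂)) (g : G) :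
    FreeGroup.mk (stackWord H Y π l₁ g) = FreeGroup.mk (stackWord H Y π l₂ g) := by
  have hR (r : FreeGroup X) (hr : r ∈ R) : π r = 1 :=
    π.mem_ker.1 (hker ▸ Subgroup.subset_normalClosure hr)
  have hle : π.ker ≤ (stackAction H Y π).ker :=
    hker ▸ Subgroup.normalClosure_le_normal fun r hr ↦
      (stackAction H Y π).mem_ker.2 (stackAction_eq_one_of_mem H Y π R hH hZ hR hr)
  have := congrArg (fun σ ↦ (σ (g, 1)).2) ((stackAction H Y π).eq_iff.2 (hle (π.eq_iff.1 h)))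
  simpa [stackAction_mk_apply] using this

end Relators

section Geodesics

variable {X G : Type} [Group G] (Y : Set X) (π : FreeGroup X →* G)

lemma IsYGeodesic.isReduced_stackWord (hπ : Function.Surjective π) :
    ∀ {l : List (X × Bool)}, IsYGeodesic Y π l →
      ∀ g, FreeGroup.IsReduced (stackWord (zeroSubgroup Y π) Y π l g)
  | [], _, _ => FreeGroup.IsReduced.nil
  | p :: l, hl, g => by
    have ih := IsYGeodesic.isReduced_stackWord hπ (hl.of_append (l₁ := [p]) Y π hπ).2 g
    by_cases hp : p.1 ∈ Y
    swap
    · simpa [stackWord, hp] using ih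
    rw [stackWord, if_pos hp]
    by_cases h0 : wordYLen Y l = 0
    · rw [List.eq_nil_of_length_eq_zero ((length_stackWord _ Y π l g).trans h0)]
      exact FreeGroup.IsReduced.singleton
    obtain ⟨u, q, l', rfl, hu, hq⟩ := exists_eq_append_cons_of_wordYLen_ne_zero Y h0
    have hsw : stackWord (zeroSubgroup Y π) Y π (u ++ q :: l') g
        = stackLetter (zeroSubgroup Y π) π q (π (FreeGroup.mk l') * g)
          :: stackWord (zeroSubgroup Y π) Y π l' g := by
      rw [stackWord_append, List.eq_nil_of_length_eq_zero ((length_stackWord _ Y π u _).trans hu),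
        List.nil_append, stackWord, if_pos hq]
    have hbase : π (FreeGroup.mk (u ++ q :: l')) * g
        = π (FreeGroup.mk (u ++ [q])) * (π (FreeGroup.mk l') * g) := by
      rw [← mul_assoc, ← map_mul, FreeGroup.mul_mk, List.append_assoc, List.singleton_append]
    rw [hsw] at ih ⊢
    refine FreeGroup.isReduced_cons_cons.2 ⟨fun he ↦ ?_, ih⟩
    by_contra hne
    rw [hbase] at he
    have hmem := mul_mem_of_stackLetter_fst_eq _ π hne he
    rw [← map_mul, FreeGroup.mul_mk] at hmem
    have hgeo : IsYGeodesic Y π ((p :: (u ++ [q])) ++ l') := by simpa using hl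
    have := (hgeo.of_append Y π hπ).1.wordYLen_eq_zero Y π hπ hmem
    simp [wordYLen_cons, wordYLen_append, hp, hq] at this

lemma IsYGeodesic.of_isReduced_stackWord (hπ : Function.Surjective π) {H : Subgroup G}
    {R : Set (FreeGroup X)} (hH : ∀ w, fYLen Y w = 0 → π w ∈ H) (hZ : Z11 Y R)
    (hker : π.ker = Subgroup.normalClosure R) {l : List (X × Bool)} {g : G}
    (h : FreeGroup.IsReduced (stackWord H Y π l g)) : IsYGeodesic Y π l := by
  obtain ⟨l', hl', e⟩ := exists_wordYLen_eq_yLen Y π hπ (π (FreeGroup.mk l))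
  refine le_antisymm (yLen_le_wordYLen Y π rfl) ?_
  calc wordYLen Y l = (stackWord H Y π l g).length := (length_stackWord H Y π l g).symm
    _ = FreeGroup.norm (FreeGroup.mk (stackWord H Y π l g)) := by
      rw [FreeGroup.norm, FreeGroup.toWord_mk, h.reduce_eq]
    _ = FreeGroup.norm (FreeGroup.mk (stackWord H Y π l' g)) := by
      rw [mk_stackWord_eq_of_map_eq H Y π R hH hZ hker hl'.symm]
    _ ≤ (stackWord H Y π l' g).length := FreeGroup.norm_mk_le
    _ = yLen Y π (π (FreeGroup.mk l)) := by rw [length_stackWord, e]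

end Geodesics

section Powers

variable {X G : Type} [Group G] (Y : Set X) (π : FreeGroup X →* G)

lemma yLen_pow_of_yLen_mul_self (hπ : Function.Surjective π) {R : Set (FreeGroup X)}
    (hker : π.ker = Subgroup.normalClosure R) (hZ : Z11 Y R) {g : G}
    (hg : yLen Y π (g * g) = 2 * yLen Y π g) (k : ℕ) : yLen Y π (g ^ k) = k * yLen Y π g := by
  obtain ⟨l, rfl, hl⟩ := exists_wordYLen_eq_yLen Y π hπ g
  have hll : IsYGeodesic Y π (l ++ l) := by
    rw [IsYGeodesic, ← FreeGroup.mul_mk, map_mul, hg, wordYLen_append, hl]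
    ring
  have hH (w : FreeGroup X) (hw : fYLen Y w = 0) : π w ∈ zeroSubgroup Y π :=
    Subgroup.subset_closure (yLen_map_eq_zero Y π hw)
  cases k with
  | zero => simp [yLen_one]
  | succ k =>
    have hgeo := IsYGeodesic.of_isReduced_stackWord Y π hπ hH hZ hker
      (isReduced_stackWord_append_flatten_replicate _ Y π (hll.isReduced_stackWord Y π hπ) k 1)
    rw [IsYGeodesic, ← FreeGroup.mul_mk, map_mul, FreeGroup.mk_flatten_replicate, map_pow,
      ← pow_succ', wordYLen_append, wordYLen_flatten_replicate, hl] at hgeo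
    rw [hgeo]
    ring

lemma yLen_zpow_of_yLen_mul_self (hπ : Function.Surjective π) {R : Set (FreeGroup X)}
    (hker : π.ker = Subgroup.normalClosure R) (hZ : Z11 Y R) {g : G}
    (hg : yLen Y π (g * g) = 2 * yLen Y π g) (m : ℤ) :
    yLen Y π (g ^ m) = m.natAbs * yLen Y π g := by
  obtain ⟨n, rfl | rfl⟩ := Int.eq_nat_or_neg m
  · rw [zpow_natCast, Int.natAbs_natCast, yLen_pow_of_yLen_mul_self Y π hπ hker hZ hg]
  · rw [zpow_neg, zpow_natCast, yLen_inv Y π hπ, Int.natAbs_neg, Int.natAbs_natCast,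
      yLen_pow_of_yLen_mul_self Y π hπ hker hZ hg]

end Powers

/-- Suppose `R` satisfies (Z1.1). If `g ∈ G(0)` is cyclically
`Y`-reduced (`|g²|_Y = 2|g|_Y`), then for every integer `m`,
`|gᵐ|_Y = |m|·|g|_Y` and `gᵐ` is cyclically `Y`-reduced. -/
theorem statement4 {X G : Type} [Group G] (Y : Set X) (R : Set (FreeGroup X))
    (π : FreeGroup X →* G) (hπ : Function.Surjective π)
    (hker : π.ker = Subgroup.normalClosure R) (hZ : Z11 Y R)
    (g : G) (hg : yLen Y π (g * g) = 2 * yLen Y π g) (m : ℤ) :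
    yLen Y π (g ^ m) = m.natAbs * yLen Y π g ∧
      yLen Y π (g ^ m * g ^ m) = 2 * yLen Y π (g ^ m) := by
  have hzpow := yLen_zpow_of_yLen_mul_self Y π hπ hker hZ hg
  refine ⟨hzpow m, ?_⟩
  rw [← zpow_add, hzpow, hzpow, ← two_mul, Int.natAbs_mul]
  simp [mul_assoc]

end OlshanskiiSapir
end
end

section
/- Suppose R satisfies (Z1.1), (Z1.2) and (Z3.2). Let g be an essential element of G(0) that is cyclically minimal in rank 1/2 and let x ∈ 0(g). Then gⁿ commutes with x: gⁿ·x = x·gⁿ. -/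
open scoped Classical

noncomputable section

namespace OlshanskiiSapir

/-!
By (Z3.2), `g = c * r` with `r` a `0`-element and `c` centralizing `0(g)`. As `g` normalizes
`0(g)`, conjugation by `g` and by `r` agree on `0(g)`, so `gⁿ` acts on `0(g)` as `rⁿ`, which is
trivial by (Z1.2).
-/

section Conjugation

variable {G : Type*} [Group G] {H : Subgroup G} {g r : G}

theorem mem_normalizer_sSup {S : Set (Subgroup G)}
    (h : ∀ H ∈ S, g ∈ Subgroup.normalizer (H : Set G)) :
    g ∈ Subgroup.normalizer ((sSup S : Subgroup G) : Set G) := by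
  rw [sSup_eq_iSup']
  exact Subgroup.iInf_normalizer_le_normalizer_iSup _
    (Subgroup.mem_iInf.mpr fun H ↦ h H H.2)

theorem conj_eq_conj_of_commute_mul_inv (hg : g ∈ Subgroup.normalizer (H : Set G))
    (hc : ∀ y ∈ H, Commute (g * r⁻¹) y) {y : G} (hy : y ∈ H) :
    r * y * r⁻¹ = g * y * g⁻¹ := by
  have hcomm := hc _ ((Subgroup.mem_normalizer_iff.mp hg y).mp hy)
  calc r * y * r⁻¹ = (g * r⁻¹)⁻¹ * ((g * y * g⁻¹) * (g * r⁻¹)) := by group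
    _ = g * y * g⁻¹ := by rw [← hcomm.eq, inv_mul_cancel_left]

theorem pow_conj_eq_pow_conj_of_commute_mul_inv (hg : g ∈ Subgroup.normalizer (H : Set G))
    (hc : ∀ y ∈ H, Commute (g * r⁻¹) y) (k : ℕ) {y : G} (hy : y ∈ H) :
    r ^ k * y * (r ^ k)⁻¹ = g ^ k * y * (g ^ k)⁻¹ := by
  induction k generalizing y with
  | zero => simp
  | succ k ih =>
    have hgy : g * y * g⁻¹ ∈ H := (Subgroup.mem_normalizer_iff.mp hg y).mp hy
    calc r ^ (k + 1) * y * (r ^ (k + 1))⁻¹ = r ^ k * (r * y * r⁻¹) * (r ^ k)⁻¹ := by group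
      _ = g ^ k * (g * y * g⁻¹) * (g ^ k)⁻¹ := by
        rw [conj_eq_conj_of_commute_mul_inv hg hc hy, ih hgy]
      _ = g ^ (k + 1) * y * (g ^ (k + 1))⁻¹ := by group

theorem pow_mem_centralizer_of_commute_mul_inv (hg : g ∈ Subgroup.normalizer (H : Set G))
    (hc : ∀ y ∈ H, Commute (g * r⁻¹) y) {n : ℕ} (hr : r ^ n = 1) :
    g ^ n ∈ Subgroup.centralizer H := by
  refine Subgroup.mem_centralizer_iff.mpr fun y hy ↦ ?_
  have hconj := pow_conj_eq_pow_conj_of_commute_mul_inv hg hc n hy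
  rw [hr, one_mul, inv_one, mul_one, eq_comm, mul_inv_eq_iff_eq_mul] at hconj
  exact hconj.symm

end Conjugation

section YLength

variable {X G : Type} [Group G] {Y : Set X} {π : FreeGroup X →* G}

theorem exists_fYLen_eq_zero_of_yLen_eq_zero (hπ : Function.Surjective π) {g : G}
    (hg : yLen Y π g = 0) : ∃ u : FreeGroup X, fYLen Y u = 0 ∧ π u = g := by
  have hne : {k | ∃ l : List (X × Bool), π (FreeGroup.mk l) = g ∧ wordYLen Y l = k}.Nonempty := by
    obtain ⟨w, rfl⟩ := hπ g
    exact ⟨_, w.toWord, by rw [FreeGroup.mk_toWord], rfl⟩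
  have hmem := Nat.sInf_mem hne
  rw [← yLen, hg] at hmem
  obtain ⟨l, hl, hl0⟩ := hmem
  exact ⟨FreeGroup.mk l, Nat.sInf_eq_zero.mpr (Or.inl ⟨l, rfl, hl0⟩), hl⟩

theorem pow_eq_one_of_yLen_eq_zero (hπ : Function.Surjective π) {n : ℕ}
    (hZ12 : ∀ u : FreeGroup X, fYLen Y u = 0 → π (u ^ n) = 1) {g : G}
    (hg : yLen Y π g = 0) : g ^ n = 1 := by
  obtain ⟨u, hu, rfl⟩ := exists_fYLen_eq_zero_of_yLen_eq_zero hπ hg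
  rw [← map_pow, hZ12 u hu]

theorem mem_normalizer_OSub (g : G) : g ∈ Subgroup.normalizer (OSub Y π g : Set G) :=
  mem_normalizer_sSup fun _ hH ↦ hH.2

end YLength

theorem statement11_general {X G₀ G₁ : Type} [Group G₀] [Group G₁] (Y : Set X)
    (n : ℕ)
    (π₀ : FreeGroup X →* G₀) (hs₀ : Function.Surjective π₀)
    (π₁ : FreeGroup X →* G₁)
    (φ : G₀ →* G₁)
    (hZ12 : ∀ u : FreeGroup X, fYLen Y u = 0 → π₀ (u ^ n) = 1)
    (hZ32 : ∀ g : G₀, Essential Y π₀ g →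
      (∀ h : G₁, yLen Y π₀ g ≤ yLen Y π₁ (h * φ g * h⁻¹)) →
      ∃ r : G₀, yLen Y π₀ r = 0 ∧ ∀ x ∈ OSub Y π₀ g, Commute (g * r⁻¹) x)
    (g : G₀) (hg : Essential Y π₀ g)
    (hgmin : ∀ h : G₁, yLen Y π₀ g ≤ yLen Y π₁ (h * φ g * h⁻¹))
    (x : G₀) (hx : x ∈ OSub Y π₀ g) :
    g ^ n * x = x * g ^ n := by
  obtain ⟨r, hr0, hrc⟩ := hZ32 g hg hgmin
  have hrn : r ^ n = 1 := pow_eq_one_of_yLen_eq_zero hs₀ hZ12 hr0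
  have hcent := pow_mem_centralizer_of_commute_mul_inv (mem_normalizer_OSub g) hrc hrn
  exact (Subgroup.mem_centralizer_iff.mp hcent x hx).symm

/-- (Lemma `star1`.) Suppose the presentation satisfies
(Z1.1), (Z1.2) and (Z3.2).  Here `G₀ = G(0)` is defined by the relators `R₀`,
and `G₁ = G(1/2)` is defined by the relators `R₀ ∪ Rh` (`Rh` being the hubs).
If `g` is an essential element of `G(0)` which is cyclically minimal in rank
`1/2`, and `x ∈ 0(g)`, then `gⁿ` commutes with `x`. -/
theorem statement11 {X G₀ G₁ : Type} [Group G₀] [Group G₁] (Y : Set X)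
    (R₀ Rh : Set (FreeGroup X)) (n : ℕ) (hodd : Odd n)
    (π₀ : FreeGroup X →* G₀) (hs₀ : Function.Surjective π₀)
    (hk₀ : π₀.ker = Subgroup.normalClosure R₀)
    (π₁ : FreeGroup X →* G₁) (hs₁ : Function.Surjective π₁)
    (hk₁ : π₁.ker = Subgroup.normalClosure (R₀ ∪ Rh))
    (φ : G₀ →* G₁) (hφ : ∀ w : FreeGroup X, φ (π₀ w) = π₁ w)
    (hZ11 : Z11 Y R₀)
    (hZ12 : ∀ u : FreeGroup X, fYLen Y u = 0 → π₀ (u ^ n) = 1)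
    (hZ32 : ∀ g : G₀, Essential Y π₀ g →
      (∀ h : G₁, yLen Y π₀ g ≤ yLen Y π₁ (h * φ g * h⁻¹)) →
      ∃ r : G₀, yLen Y π₀ r = 0 ∧ ∀ x ∈ OSub Y π₀ g, Commute (g * r⁻¹) x)
    (g : G₀) (hg : Essential Y π₀ g)
    (hgmin : ∀ h : G₁, yLen Y π₀ g ≤ yLen Y π₁ (h * φ g * h⁻¹))
    (x : G₀) (hx : x ∈ OSub Y π₀ g) :
    g ^ n * x = x * g ^ n :=
  statement11_general Y n π₀ hs₀ π₁ φ hZ12 hZ32 g hg hgmin x hx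

end OlshanskiiSapir
end
end

section
/- Let G = ⟨A | R⟩ be a group satisfying the identity xⁿ = 1 for a sufficiently large odd n. Let P₁ and Q₁ be malnormal subgroups of G such that x·P₁·x⁻¹ ∩ Q₁ = {1} for every x ∈ G, and let φ: P₁ → Q₁ be an isomorphism. Form the HNN extension H = ⟨A, t | R, t·u·t⁻¹ = φ(u) for all u ∈ P₁⟩, regarded with A as 0-letters and {t} as the non-zero letter. Then for every essential cyclically minimal element h of H (with respect to t-length), the associated 0-subgroup 0(h) is trivial, and hence condition (Z3) holds for this presentation. -/
/-!
By Britton's lemma the `t`-length of an element is the length of any reduced word representing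
it. The reduced word of a cyclically minimal `h` is cyclically reduced, so
`tLen (h ^ 4) = 4 * tLen h ≥ 2`. If `c` and `h⁻⁴ c h⁴ = y` both lie in `G`, then `c W = W y` for a
reduced word `W = g₀ t^{u₁} g₁ t^{u₂} ⋯` of `h⁴`. Britton's lemma, applied twice, moves `c` past
the first two `t`-letters: it becomes an element of `toSubgroup u₁` whose `g₁`-conjugate lies in
`toSubgroup (-u₂)`. If `u₂ = -u₁`, then `g₁ ∉ toSubgroup u₁` because `W` is reduced, and
malnormality of `toSubgroup u₁` forces that element to be trivial; if `u₂ = u₁`, so does the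
trivial intersection of the conjugates of `P₁` with `Q₁`. A `0`-subgroup normalized by `h` is
normalized by `h⁴`, hence trivial as well.
-/

open scoped Classical

noncomputable section

namespace OlshanskiiSapir

variable {G : Type} [Group G] {A B : Subgroup G} {φ : A ≃* B}

/-- The letters generating an HNN extension: elements of the base group `G`
and the stable letter `t` and its inverse. -/
def hnnLetter (a : G ⊕ Bool) : HNNExtension G A B φ :=
  match a with
  | Sum.inl g => HNNExtension.of g
  | Sum.inr true => HNNExtension.t
  | Sum.inr false => (HNNExtension.t : HNNExtension G A B φ)⁻¹

/-- Number of occurrences of `t^{±1}` in a word. -/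
def tCount {G : Type} (l : List (G ⊕ Bool)) : ℕ :=
  (l.filter fun a => Sum.isRight a).length

/-- The `t`-length of an element of the HNN extension: the minimal number of
occurrences of `t^{±1}` among expressions representing it. -/
def tLen (h : HNNExtension G A B φ) : ℕ :=
  sInf {k | ∃ l : List (G ⊕ Bool),
    (l.map (hnnLetter : G ⊕ Bool → HNNExtension G A B φ)).prod = h ∧ tCount l = k}

open HNNExtension NormalWord

@[simp] lemma tCount_nil {α : Type} : tCount ([] : List (α ⊕ Bool)) = 0 := rfl

@[simp] lemma tCount_cons_inl {α : Type} (g : α) (l : List (α ⊕ Bool)) :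
    tCount (Sum.inl g :: l) = tCount l := by
  simp [tCount]

@[simp] lemma tCount_cons_inr {α : Type} (b : Bool) (l : List (α ⊕ Bool)) :
    tCount (Sum.inr b :: l) = tCount l + 1 := by
  simp [tCount, List.filter_cons]

@[simp] lemma tCount_append {α : Type} (l₁ l₂ : List (α ⊕ Bool)) :
    tCount (l₁ ++ l₂) = tCount l₁ + tCount l₂ := by
  simp [tCount, List.filter_append]

lemma hnnLetter_inr (b : Bool) :
    (hnnLetter (Sum.inr b) : HNNExtension G A B φ) = t ^ ((if b then 1 else -1 : ℤˣ) : ℤ) := by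
  cases b <;> simp [hnnLetter]

lemma tLen_le_tCount {x : HNNExtension G A B φ} {l : List (G ⊕ Bool)}
    (hl : (l.map (hnnLetter : G ⊕ Bool → HNNExtension G A B φ)).prod = x) :
    tLen x ≤ tCount l :=
  Nat.sInf_le ⟨l, hl, rfl⟩

def pairProd (φ : A ≃* B) (l : List (ℤˣ × G)) : HNNExtension G A B φ :=
  (l.map fun p => t ^ (p.1 : ℤ) * of p.2).prod

@[simp] lemma pairProd_nil : pairProd φ ([] : List (ℤˣ × G)) = 1 := rfl

@[simp] lemma pairProd_cons (p : ℤˣ × G) (l : List (ℤˣ × G)) :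
    pairProd φ (p :: l) = t ^ (p.1 : ℤ) * of p.2 * pairProd φ l := by
  simp [pairProd]

@[simp] lemma pairProd_append (l₁ l₂ : List (ℤˣ × G)) :
    pairProd φ (l₁ ++ l₂) = pairProd φ l₁ * pairProd φ l₂ := by
  simp [pairProd]

lemma reducedWord_prod_eq (w : ReducedWord G A B) :
    w.prod φ = of w.head * pairProd φ w.toList := rfl

def pairLetters {α : Type} : List (ℤˣ × α) → List (α ⊕ Bool)
  | [] => []
  | p :: l => Sum.inr (decide (p.1 = 1)) :: Sum.inl p.2 :: pairLetters l

lemma prod_map_hnnLetter_pairLetters (l : List (ℤˣ × G)) :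
    ((pairLetters l).map (hnnLetter : G ⊕ Bool → HNNExtension G A B φ)).prod = pairProd φ l := by
  induction l with
  | nil => rfl
  | cons p l ih =>
    rcases Int.units_eq_one_or p.1 with hp | hp <;>
      simp [pairLetters, hp, hnnLetter, ih, mul_assoc]

lemma tCount_pairLetters {α : Type} (l : List (ℤˣ × α)) : tCount (pairLetters l) = l.length := by
  induction l with
  | nil => rfl
  | cons p l ih => simp [pairLetters, ih]

lemma tLen_of_mul_pairProd_mul_of_le (g g' : G) (l : List (ℤˣ × G)) :
    tLen (of g * pairProd φ l * of g') ≤ l.length :=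
  calc tLen (of g * pairProd φ l * of g')
      ≤ tCount (Sum.inl g :: (pairLetters l ++ [Sum.inl g'])) :=
        tLen_le_tCount (by simp [prod_map_hnnLetter_pairLetters, hnnLetter, ← mul_assoc])
    _ = l.length := by simp [tCount_pairLetters]

lemma length_toList_unitsSMul_le {d : TransversalPair G A B} (u : ℤˣ) (w : NormalWord d) :
    (unitsSMul φ u w).toList.length ≤ w.toList.length + 1 := by
  rw [unitsSMul]
  split_ifs with hcan
  · induction w using consRecOn with
    | ofGroup g => simp [Cancels] at hcan
    | cons g u' w h1 h2 _ =>
      simp only [unitsSMulWithCancel, consRecOn_cons, group_smul_toList, cons_toList,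
        List.length_cons]
      omega
  · simp

lemma length_toList_hnnLetter_smul_le {d : TransversalPair G A B} (a : G ⊕ Bool)
    (w : NormalWord d) :
    ((hnnLetter a : HNNExtension G A B φ) • w).toList.length ≤ tCount [a] + w.toList.length := by
  rcases a with g | b
  · simp [hnnLetter, of_smul_eq_smul, group_smul_toList]
  · rw [hnnLetter_inr, t_pow_smul_eq_unitsSMul]
    have := length_toList_unitsSMul_le (φ := φ) (if b then 1 else -1) w
    simp only [tCount_cons_inr, tCount_nil]
    omega

lemma length_toList_prod_smul_le {d : TransversalPair G A B} (l : List (G ⊕ Bool))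
    (w : NormalWord d) :
    ((l.map (hnnLetter : G ⊕ Bool → HNNExtension G A B φ)).prod • w).toList.length
      ≤ tCount l + w.toList.length := by
  induction l with
  | nil => simp
  | cons a l ih =>
    rw [List.map_cons, List.prod_cons, mul_smul]
    have := length_toList_hnnLetter_smul_le (φ := φ) a
      ((l.map (hnnLetter : G ⊕ Bool → HNNExtension G A B φ)).prod • w)
    rw [← List.singleton_append, tCount_append]
    omega

lemma length_toList_le_tLen (w : ReducedWord G A B) :
    w.toList.length ≤ tLen (w.prod φ) := by
  obtain ⟨d⟩ := TransversalPair.nonempty G A B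
  have hne : {k | ∃ l : List (G ⊕ Bool),
      (l.map (hnnLetter : G ⊕ Bool → HNNExtension G A B φ)).prod = w.prod φ ∧
        tCount l = k}.Nonempty :=
    ⟨_, Sum.inl w.head :: pairLetters w.toList, by
      simp [prod_map_hnnLetter_pairLetters, hnnLetter, reducedWord_prod_eq w], rfl⟩
  obtain ⟨l, hl, hk⟩ := Nat.sInf_mem hne
  have hv : (w.prod φ • (empty : NormalWord d)).toReducedWord.prod φ = w.prod φ := by
    simp [prod_smul]
  have hlen := congrArg List.length (ReducedWord.map_fst_eq_and_of_prod_eq φ hv).1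
  have hsmul := length_toList_prod_smul_le (φ := φ) l (empty : NormalWord d)
  rw [hl] at hsmul
  simp only [List.length_map] at hlen
  simp only [empty_toList, List.length_nil, add_zero] at hsmul
  rw [tLen, ← hk]
  exact hlen ▸ hsmul

lemma tLen_reducedWord_prod (w : ReducedWord G A B) : tLen (w.prod φ) = w.toList.length :=
  le_antisymm
    (by simpa [reducedWord_prod_eq] using tLen_of_mul_pairProd_mul_of_le (φ := φ) w.head 1 w.toList)
    (length_toList_le_tLen w)

lemma exists_reducedWord_prod_eq (x : HNNExtension G A B φ) :
    ∃ w : ReducedWord G A B, w.prod φ = x := by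
  obtain ⟨d⟩ := TransversalPair.nonempty G A B
  exact ⟨(NormalWord.equiv φ d x).toReducedWord, (NormalWord.equiv φ d).symm_apply_apply x⟩

lemma tLen_eq_zero_iff {x : HNNExtension G A B φ} : tLen x = 0 ↔ x ∈ (of : G →* _).range := by
  obtain ⟨w, rfl⟩ := exists_reducedWord_prod_eq x
  refine ⟨fun hx => ⟨w.head, ?_⟩, fun hx => ?_⟩
  · rw [tLen_reducedWord_prod w, List.length_eq_zero_iff] at hx
    simp [reducedWord_prod_eq w, hx]
  · rw [tLen_reducedWord_prod w, ReducedWord.toList_eq_nil_of_mem_of_range φ w hx, List.length_nil]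

def IsMalnormal (H : Subgroup G) : Prop :=
  ∀ x : G, x ∉ H → ∀ g ∈ H, x * g * x⁻¹ ∈ H → g = 1

def ConjDisjoint (H K : Subgroup G) : Prop :=
  ∀ x : G, ∀ g ∈ H, x * g * x⁻¹ ∈ K → g = 1

lemma ConjDisjoint.symm {H K : Subgroup G} (h : ConjDisjoint H K) : ConjDisjoint K H := by
  intro x g hg hxg
  exact conj_eq_one_iff.1 (h x⁻¹ (x * g * x⁻¹) hxg (by simpa [mul_assoc] using hg))

lemma isMalnormal_toSubgroup (hA : IsMalnormal A) (hB : IsMalnormal B) (u : ℤˣ) :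
    IsMalnormal (toSubgroup A B u) := by
  rcases Int.units_eq_one_or u with rfl | rfl
  exacts [hA, hB]

lemma conjDisjoint_toSubgroup (hAB : ConjDisjoint A B) (u : ℤˣ) :
    ConjDisjoint (toSubgroup A B u) (toSubgroup A B (-u)) := by
  rcases Int.units_eq_one_or u with rfl | rfl
  exacts [hAB, by simpa using hAB.symm]

lemma of_toSubgroupEquiv (u : ℤˣ) (a : toSubgroup A B u) :
    (of (toSubgroupEquiv φ u a : G) : HNNExtension G A B φ)
      = t ^ (u : ℤ) * of (a : G) * t ^ (-(u : ℤ)) := by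
  rcases Int.units_eq_one_or u with rfl | rfl
  · exact (equiv_eq_conj (φ := φ) a).trans (by simp)
  · exact (equiv_symm_eq_conj (φ := φ) a).trans (by simp)

/-- The relation in `ReducedWord.chain`. -/
abbrev NoPinch (A B : Subgroup G) (a b : ℤˣ × G) : Prop :=
  a.2 ∈ toSubgroup A B a.1 → a.1 = b.1

lemma isChain_noPinch_append_singleton {L : List (ℤˣ × G)} {u : ℤˣ} {g : G} (g' : G)
    (h : (L ++ [(u, g)]).IsChain (NoPinch A B)) : (L ++ [(u, g')]).IsChain (NoPinch A B) := by
  rw [List.isChain_append] at h ⊢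
  refine ⟨h.1, List.isChain_singleton _, fun a ha b hb => ?_⟩
  simp only [List.head?_cons, Option.mem_def, Option.some_inj] at hb
  subst hb
  exact h.2.2 a ha (u, g) rfl

/-- Britton's lemma applied to `c W = W y`: the subword `t^{-u} g₀⁻¹ c g₀ t^u` must cancel. -/
lemma head_inv_mul_mul_head_mem {w : ReducedWord G A B} {u : ℤˣ}
    (hu : w.toList.head?.map Prod.fst = some u) {c y : G}
    (heq : of c * w.prod φ = w.prod φ * of y) :
    w.head⁻¹ * c * w.head ∈ toSubgroup A B (-u) := by
  obtain ⟨L, p, hLp⟩ : ∃ L p, w.toList = L ++ [p] :=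
    (List.eq_nil_or_concat' w.toList).resolve_left (by rintro h; simp [h] at hu)
  let w₁ : ReducedWord G A B := ⟨c * w.head, w.toList, w.chain⟩
  let w₂ : ReducedWord G A B :=
    ⟨w.head, L ++ [(p.1, p.2 * y)], isChain_noPinch_append_singleton _ (hLp ▸ w.chain)⟩
  have hprod : w₁.prod φ = w₂.prod φ := by
    have : w₂.prod φ = w.prod φ * of y := by
      simp [w₂, reducedWord_prod_eq, hLp, mul_assoc]
    rw [this, ← heq]
    simp [w₁, reducedWord_prod_eq, mul_assoc]
  have := (ReducedWord.map_fst_eq_and_of_prod_eq φ hprod).2 u hu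
  simpa [w₁, w₂, mul_assoc] using inv_mem this

lemma eq_one_of_conj_mem_toSubgroup (hA : IsMalnormal A) (hB : IsMalnormal B)
    (hAB : ConjDisjoint A B) {u v : ℤˣ} {c g : G} (hc : c ∈ toSubgroup A B u)
    (hconj : g⁻¹ * c * g ∈ toSubgroup A B (-v)) (hpinch : g ∈ toSubgroup A B u → u = v) :
    c = 1 := by
  by_cases huv : u = v
  · subst huv
    exact conjDisjoint_toSubgroup hAB u g⁻¹ c hc (by simpa using hconj)
  · have hv : -v = u := (Int.units_ne_iff_eq_neg.1 huv).symm
    rw [hv] at hconj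
    refine isMalnormal_toSubgroup hA hB u g⁻¹ ?_ c hc (by simpa using hconj)
    exact fun hg => huv (hpinch (by simpa using inv_mem hg))

lemma eq_one_of_of_mul_eq_mul_of (hA : IsMalnormal A) (hB : IsMalnormal B)
    (hAB : ConjDisjoint A B) {x : HNNExtension G A B φ} (hx : 2 ≤ tLen x) {c y : G}
    (heq : of c * x = x * of y) : c = 1 := by
  obtain ⟨w, rfl⟩ := exists_reducedWord_prod_eq x
  rw [tLen_reducedWord_prod] at hx
  obtain ⟨u₁, g₁, u₂, g₂, rest, hlist⟩ :
      ∃ u₁ g₁ u₂ g₂ rest, w.toList = (u₁, g₁) :: (u₂, g₂) :: rest := by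
    rcases hw : w.toList with _ | ⟨⟨u₁, g₁⟩, _ | ⟨⟨u₂, g₂⟩, rest⟩⟩ <;> simp [hw] at hx
    exact ⟨u₁, g₁, u₂, g₂, rest, rfl⟩
  have hchain := w.chain
  rw [hlist, List.isChain_cons_cons] at hchain
  let v : ReducedWord G A B := ⟨g₁, (u₂, g₂) :: rest, hchain.2⟩
  have hw : w.prod φ = of w.head * t ^ (u₁ : ℤ) * v.prod φ := by
    simp [v, reducedWord_prod_eq, hlist, mul_assoc]
  let a : toSubgroup A B (-u₁) := ⟨_, head_inv_mul_mul_head_mem (u := u₁) (by simp [hlist]) heq⟩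
  set c₁ : G := (toSubgroupEquiv φ (-u₁) a : G)
  have hc₁ : c₁ ∈ toSubgroup A B u₁ := by simpa using (toSubgroupEquiv φ (-u₁) a).2
  have heq₁ : of c₁ * v.prod φ = v.prod φ * of y := by
    rw [hw] at heq
    have hc₁' : (of c₁ : HNNExtension G A B φ)
        = (of w.head * t ^ (u₁ : ℤ))⁻¹ * of c * (of w.head * t ^ (u₁ : ℤ)) := by
      simp only [c₁, of_toSubgroupEquiv, a, map_mul, map_inv, Units.val_neg, neg_neg, zpow_neg]
      group
    rw [hc₁']
    calc _ = (of w.head * t ^ (u₁ : ℤ))⁻¹ * (of c * (of w.head * t ^ (u₁ : ℤ) * v.prod φ)) := by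
          group
      _ = v.prod φ * of y := by rw [heq]; group
  have h₂ := head_inv_mul_mul_head_mem (w := v) (u := u₂) rfl heq₁
  have hc₁one : c₁ = 1 := eq_one_of_conj_mem_toSubgroup hA hB hAB hc₁ h₂ hchain.1
  have ha : w.head⁻¹ * c * w.head = 1 := by simpa [c₁, a] using hc₁one
  calc c = w.head * (w.head⁻¹ * c * w.head) * w.head⁻¹ := by group
    _ = 1 := by rw [ha]; group

def IsCyclicallyMinimal (h : HNNExtension G A B φ) : Prop :=
  ∀ c : HNNExtension G A B φ, IsConj c h → tLen h ≤ tLen c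

/-- Otherwise conjugating by `g₀ t^{u₁}` would cancel the first and the last `t`-letter. -/
lemma noPinch_last_mul_head {w : ReducedWord G A B} (hmin : IsCyclicallyMinimal (w.prod φ))
    {u₁ : ℤˣ} (hfirst : w.toList.head?.map Prod.fst = some u₁) {L : List (ℤˣ × G)}
    {p : ℤˣ × G} (hlast : w.toList = L ++ [p]) :
    p.2 * w.head ∈ toSubgroup A B p.1 → p.1 = u₁ := by
  intro hmem
  rcases L with _ | ⟨q, L⟩
  · simpa [hlast] using hfirst
  by_contra hne
  have hq : q.1 = u₁ := by simpa [hlast] using hfirst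
  have hp : -p.1 = u₁ := by rw [Int.units_ne_iff_eq_neg.1 hne, neg_neg]
  let z : HNNExtension G A B φ := of w.head * t ^ (q.1 : ℤ)
  let e : G := toSubgroupEquiv φ p.1 ⟨_, hmem⟩
  have hconj : z⁻¹ * w.prod φ * z = of q.2 * pairProd φ L * of e := by
    simp only [z, e, of_toSubgroupEquiv, reducedWord_prod_eq, hlast, List.cons_append,
      pairProd_cons, pairProd_append, pairProd_nil, map_mul, hq, ← hp, Units.val_neg]
    group
  have hshort := tLen_of_mul_pairProd_mul_of_le (φ := φ) q.2 e L
  have hlen := hmin (z⁻¹ * w.prod φ * z) (isConj_iff.2 ⟨z, by group⟩)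
  rw [hconj, tLen_reducedWord_prod, hlast] at hlen
  simp only [List.cons_append, List.length_cons, List.length_append] at hlen
  omega

/-- The powers of a cyclically reduced word `w` are represented by the reduced words
`r ⋯ r w`, where `r` is `w` with its head moved onto its last letter. -/
lemma exists_reducedWord_prod_pow_succ {w : ReducedWord G A B} {u₁ : ℤˣ}
    (hfirst : w.toList.head?.map Prod.fst = some u₁) {L : List (ℤˣ × G)} {p : ℤˣ × G}
    (hlast : w.toList = L ++ [p]) (hpinch : p.2 * w.head ∈ toSubgroup A B p.1 → p.1 = u₁)
    (n : ℕ) :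
    ∃ W : ReducedWord G A B, W.head = w.head ∧ W.toList.head?.map Prod.fst = some u₁ ∧
      W.prod φ = w.prod φ ^ (n + 1) ∧ W.toList.length = (n + 1) * w.toList.length := by
  induction n with
  | zero => exact ⟨w, rfl, hfirst, by simp, by simp⟩
  | succ n ih =>
    obtain ⟨W, hhead, hWfirst, hprod, hlen⟩ := ih
    set r := L ++ [(p.1, p.2 * w.head)]
    have hr : r.IsChain (NoPinch A B) := isChain_noPinch_append_singleton _ (hlast ▸ w.chain)
    have hchain : (r ++ W.toList).IsChain (NoPinch A B) := by
      refine List.isChain_append.2 ⟨hr, W.chain, fun a ha b hb => ?_⟩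
      obtain rfl : a = (p.1, p.2 * w.head) := by simpa [r] using ha.symm
      have hb₁ : b.1 = u₁ := by simpa [Option.mem_def.1 hb] using hWfirst
      exact fun hmem => (hpinch hmem).trans hb₁.symm
    refine ⟨⟨w.head, r ++ W.toList, hchain⟩, rfl, ?_, ?_, ?_⟩
    · rcases L with _ | ⟨q, L⟩ <;> simpa [r, hlast] using hfirst
    · rw [pow_succ', ← hprod, reducedWord_prod_eq w, reducedWord_prod_eq W, hhead, hlast]
      simp [reducedWord_prod_eq, r, mul_assoc]
    · simp [r, hlen, hlast]
      ring

lemma tLen_pow_of_isCyclicallyMinimal {h : HNNExtension G A B φ} (hmin : IsCyclicallyMinimal h)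
    (n : ℕ) : tLen (h ^ n) = n * tLen h := by
  obtain ⟨w, rfl⟩ := exists_reducedWord_prod_eq h
  rcases hw : w.toList with _ | ⟨q, l⟩
  · have : w.prod φ ∈ (of : G →* _).range := ⟨w.head, by simp [reducedWord_prod_eq, hw]⟩
    rw [tLen_eq_zero_iff.2 (pow_mem this n), tLen_eq_zero_iff.2 this, mul_zero]
  have hfirst : w.toList.head?.map Prod.fst = some q.1 := by simp [hw]
  obtain ⟨L, p, hlast⟩ := (List.eq_nil_or_concat' w.toList).resolve_left (by simp [hw])
  rcases n with _ | n
  · simpa using tLen_eq_zero_iff.2 (one_mem _)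
  obtain ⟨W, -, -, hprod, hlen⟩ := exists_reducedWord_prod_pow_succ hfirst hlast
    (noPinch_last_mul_head hmin hfirst hlast) n
  rw [← hprod, tLen_reducedWord_prod, tLen_reducedWord_prod, hlen, hw]

lemma eq_one_of_tLen_conj_eq_zero (hA : IsMalnormal A) (hB : IsMalnormal B)
    (hAB : ConjDisjoint A B) {w : HNNExtension G A B φ} (hw : 2 ≤ tLen w)
    {x : HNNExtension G A B φ} (hx : tLen x = 0) (hwx : tLen (w⁻¹ * x * w) = 0) : x = 1 := by
  obtain ⟨c, rfl⟩ := tLen_eq_zero_iff.1 hx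
  obtain ⟨y, hy⟩ := tLen_eq_zero_iff.1 hwx
  rw [eq_one_of_of_mul_eq_mul_of hA hB hAB hw (c := c) (y := y) (by rw [hy]; group), map_one]

/-- Let `G` satisfy the identity `xⁿ = 1` for a sufficiently
large odd `n`, let `P₁`, `Q₁` be malnormal subgroups of `G` with
`x·P₁·x⁻¹ ∩ Q₁ = {1}` for every `x ∈ G`, and let `φ : P₁ ≃ Q₁`.  In the HNN
extension `H = ⟨G, t ∣ t·u·t⁻¹ = φ(u) (u ∈ P₁)⟩` (with `A` as `0`-letters and
`t` the non-zero letter), for every essential cyclically minimal (w.r.t.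
`t`-length) element `h` of `H` the associated `0`-subgroup `0(h)` — the maximal
subgroup of `t`-length-`0` elements normalized by `h` — is trivial; hence
condition (Z3) holds: any `0`-element `x` with `h⁻⁴·x·h⁴` of `t`-length `0` is
trivial. -/
theorem statement19 :
    ∃ N : ℕ, ∀ n : ℕ, Odd n → N ≤ n →
      ∀ (G : Type) [inst : Group G], ∀ (P₁ Q₁ : Subgroup G) (φ : P₁ ≃* Q₁),
        (∀ g : G, g ^ n = 1) →
        (∀ x : G, x ∉ P₁ → ∀ g ∈ P₁, x * g * x⁻¹ ∈ P₁ → g = 1) →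
        (∀ x : G, x ∉ Q₁ → ∀ g ∈ Q₁, x * g * x⁻¹ ∈ Q₁ → g = 1) →
        (∀ x : G, ∀ g ∈ P₁, x * g * x⁻¹ ∈ Q₁ → g = 1) →
        ∀ h : HNNExtension G P₁ Q₁ φ,
          (∀ c : HNNExtension G P₁ Q₁ φ, IsConj c h → tLen c ≠ 0) →
          (∀ c : HNNExtension G P₁ Q₁ φ, IsConj c h → tLen h ≤ tLen c) →
          sSup {Hs : Subgroup (HNNExtension G P₁ Q₁ φ) |
              (∀ x ∈ Hs, tLen x = 0) ∧ h ∈ Subgroup.normalizer (Hs : Set (HNNExtension G P₁ Q₁ φ))} = ⊥ ∧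
            ∀ x : HNNExtension G P₁ Q₁ φ, tLen x = 0 →
              tLen (h ^ (-4 : ℤ) * x * h ^ (4 : ℤ)) = 0 → x = 1 := by
  refine ⟨0, fun n _ _ G _ P₁ Q₁ φ _ hP hQ hPQ h hess hmin => ?_⟩
  have hlen : 2 ≤ tLen (h ^ 4) := by
    have := hess h (IsConj.refl h)
    rw [tLen_pow_of_isCyclicallyMinimal hmin]
    omega
  have hZ3 {x} := eq_one_of_tLen_conj_eq_zero hP hQ hPQ hlen (x := x)
  refine ⟨?_, fun x hx hx4 => hZ3 hx (by simpa using hx4)⟩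
  refine sSup_eq_bot.2 fun K ⟨hK, hnorm⟩ => (Subgroup.eq_bot_iff_forall K).2 fun x hx => ?_
  have hx4 := (Subgroup.mem_normalizer_iff.1 (inv_mem (pow_mem hnorm 4)) x).1 hx
  exact hZ3 (hK x hx) (hK _ (by simpa using hx4))

end OlshanskiiSapir
end
end
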